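/- Let A be a real N × N strictly diagonally dominant matrix with a_{ii} > 0 for all i and a_{ij} ≤ 0 for all i ≠ j. Let G_1, …, G_{N_c} be nonempty, pairwise disjoint subsets of {1, …, N} whose union is {1, …, N}, let P be the associated N × N_c prolongation matrix, and set A_c = Pᵀ A P. Then A_c again has positive diagonal entries, nonpositive off-diagonal entries, and is strictly diagonally dominant: (A_c)_{ii} > 0 for all i, (A_c)_{ij} ≤ 0 for all i ≠ j, and |(A_c)_{ii}| > Σ_{j ≠ i} |(A_c)_{ij}| for every i. -/

import Mathlib

/-!
Since `A` has nonpositive off-diagonal entries and nonnegative diagonal, strict diagonal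
dominance of a row is equivalent to its row sum being positive. Every entry of `Pᵀ A P` is the
sum of `A` over a block `G j × G j'`; blocks with `j ≠ j'` avoid the diagonal of `A`, so the
coarse off-diagonal entries are nonpositive, and because the aggregates partition the index set,
the `j`-th coarse row sum is the sum of the (positive) fine row sums over the nonempty `G j`.
-/

open Matrix Finset

section RowSums

variable {ι α : Type*} [Fintype ι] [DecidableEq ι] [Field α] [LinearOrder α] [IsStrictOrderedRing α]
  (A : Matrix ι ι α) (i : ι)

theorem sum_row_pos_of_sum_erase_abs_lt (hdiag : 0 ≤ A i i)
    (hsdd : ∑ j ∈ univ.erase i, |A i j| < |A i i|) : 0 < ∑ j, A i j := by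
  have hneg : -∑ j ∈ univ.erase i, A i j ≤ ∑ j ∈ univ.erase i, |A i j| := by
    rw [← sum_neg_distrib]
    exact sum_le_sum fun j _ => neg_le_abs _
  rw [← add_sum_erase _ _ (mem_univ i)]
  rw [abs_of_nonneg hdiag] at hsdd
  linarith

variable {A i}

theorem sum_erase_abs_eq_neg_sum_erase (hoff : ∀ j, j ≠ i → A i j ≤ 0) :
    ∑ j ∈ univ.erase i, |A i j| = -∑ j ∈ univ.erase i, A i j := by
  rw [← sum_neg_distrib]
  exact sum_congr rfl fun j hj => abs_of_nonpos (hoff j (ne_of_mem_erase hj))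

theorem diag_pos_of_sum_row_pos (hoff : ∀ j, j ≠ i → A i j ≤ 0) (hrow : 0 < ∑ j, A i j) :
    0 < A i i := by
  have hoff_sum : ∑ j ∈ univ.erase i, A i j ≤ 0 :=
    sum_nonpos fun j hj => hoff j (ne_of_mem_erase hj)
  rw [← add_sum_erase _ _ (mem_univ i)] at hrow
  linarith

theorem sum_erase_abs_lt_of_sum_row_pos (hoff : ∀ j, j ≠ i → A i j ≤ 0)
    (hrow : 0 < ∑ j, A i j) : ∑ j ∈ univ.erase i, |A i j| < |A i i| := by
  rw [sum_erase_abs_eq_neg_sum_erase hoff, abs_of_pos (diag_pos_of_sum_row_pos hoff hrow)]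
  rw [← add_sum_erase _ _ (mem_univ i)] at hrow
  linarith

end RowSums

section Galerkin

variable {ι κ R : Type*} [Fintype ι] [DecidableEq ι]

def prolongation [Zero R] [One R] (G : κ → Finset ι) : Matrix ι κ R :=
  of fun i j => if i ∈ G j then 1 else 0

def coarseGridMatrix [CommSemiring R] (G : κ → Finset ι) (A : Matrix ι ι R) : Matrix κ κ R :=
  (prolongation (R := R) G)ᵀ * A * prolongation (R := R) G

theorem coarseGridMatrix_apply [CommSemiring R] (G : κ → Finset ι)
    (A : Matrix ι ι R) (j j' : κ) :
    coarseGridMatrix G A j j' = ∑ i ∈ G j, ∑ k ∈ G j', A i k := by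
  simp only [coarseGridMatrix, prolongation, Matrix.mul_apply, transpose_apply, of_apply, ite_mul,
    one_mul, zero_mul, mul_ite, mul_one, mul_zero, sum_ite_mem, univ_inter]
  exact sum_comm

theorem sum_sum_of_cover_of_pairwiseDisjoint [Fintype κ] [AddCommMonoid R] {G : κ → Finset ι}
    (hG_disjoint : ∀ j j', j ≠ j' → Disjoint (G j) (G j')) (hG_cover : ∀ i, ∃ j, i ∈ G j)
    (f : ι → R) : ∑ j, ∑ i ∈ G j, f i = ∑ i, f i := by
  rw [← sum_biUnion fun j _ j' _ h => hG_disjoint j j' h]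
  congr 1
  exact eq_univ_of_forall fun i => mem_biUnion.mpr
    (let ⟨j, hj⟩ := hG_cover i; ⟨j, mem_univ j, hj⟩)

theorem sum_coarseGridMatrix_row [Fintype κ] [CommSemiring R] {G : κ → Finset ι}
    (hG_disjoint : ∀ j j', j ≠ j' → Disjoint (G j) (G j')) (hG_cover : ∀ i, ∃ j, i ∈ G j)
    (A : Matrix ι ι R) (j : κ) :
    ∑ j', coarseGridMatrix G A j j' = ∑ i ∈ G j, ∑ k, A i k := by
  simp only [coarseGridMatrix_apply]
  rw [sum_comm]
  exact sum_congr rfl fun i _ => sum_sum_of_cover_of_pairwiseDisjoint hG_disjoint hG_cover _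

theorem coarseGridMatrix_apply_nonpos [CommSemiring R] [PartialOrder R] [IsOrderedAddMonoid R]
    {G : κ → Finset ι} {A : Matrix ι ι R}
    (hoff : ∀ i k, i ≠ k → A i k ≤ 0) {j j' : κ} (hG : Disjoint (G j) (G j')) :
    coarseGridMatrix G A j j' ≤ 0 := by
  rw [coarseGridMatrix_apply]
  exact sum_nonpos fun i hi => sum_nonpos fun k hk => hoff i k (hG.forall_ne_finset hi hk)

end Galerkin

theorem coarse_grid_matrix_sdd_general
    {N Nc : ℕ}
    (A : Matrix (Fin N) (Fin N) ℝ)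
    (hdiag : ∀ i, 0 < A i i)
    (hoff : ∀ i j, i ≠ j → A i j ≤ 0)
    (hsdd : ∀ i, ∑ j ∈ Finset.univ.erase i, |A i j| < |A i i|)
    (G : Fin Nc → Finset (Fin N))
    (hG_nonempty : ∀ j, (G j).Nonempty)
    (hG_disjoint : ∀ j j', j ≠ j' → Disjoint (G j) (G j'))
    (hG_cover : ∀ i : Fin N, ∃ j, i ∈ G j)
    (P : Matrix (Fin N) (Fin Nc) ℝ)
    (hP : ∀ i j, P i j = if i ∈ G j then 1 else 0)
    (Ac : Matrix (Fin Nc) (Fin Nc) ℝ)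
    (hAc : Ac = Pᵀ * A * P) :
    (∀ i, 0 < Ac i i) ∧ (∀ i j, i ≠ j → Ac i j ≤ 0) ∧
    (∀ i, ∑ j ∈ Finset.univ.erase i, |Ac i j| < |Ac i i|) := by
  obtain rfl : P = prolongation G := ext hP
  replace hAc : Ac = coarseGridMatrix G A := hAc
  have hoffc : ∀ j j', j ≠ j' → Ac j j' ≤ 0 := fun j j' h =>
    hAc ▸ coarseGridMatrix_apply_nonpos hoff (hG_disjoint j j' h)
  have hrowc : ∀ j, 0 < ∑ j', Ac j j' := fun j => by
    rw [hAc, sum_coarseGridMatrix_row hG_disjoint hG_cover]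
    exact sum_pos (fun i _ => sum_row_pos_of_sum_erase_abs_lt A i (hdiag i).le (hsdd i))
      (hG_nonempty j)
  exact ⟨fun j => diag_pos_of_sum_row_pos (fun j' h => hoffc j j' h.symm) (hrowc j), hoffc,
    fun j => sum_erase_abs_lt_of_sum_row_pos (fun j' h => hoffc j j' h.symm) (hrowc j)⟩

/-- If `A` is strictly diagonally dominant with positive diagonal and
nonpositive off-diagonal entries, then so is the Galerkin coarse grid matrix
`A_c = Pᵀ A P` built from the prolongation matrix `P` of a disjoint covering family
of aggregates. -/
theorem coarse_grid_matrix_sdd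
    {N Nc : ℕ} (hN : 0 < N) (hNc : 0 < Nc)
    (A : Matrix (Fin N) (Fin N) ℝ)
    (hdiag : ∀ i, 0 < A i i)
    (hoff : ∀ i j, i ≠ j → A i j ≤ 0)
    (hsdd : ∀ i, ∑ j ∈ Finset.univ.erase i, |A i j| < |A i i|)
    (G : Fin Nc → Finset (Fin N))
    (hG_nonempty : ∀ j, (G j).Nonempty)
    (hG_disjoint : ∀ j j', j ≠ j' → Disjoint (G j) (G j'))
    (hG_cover : ∀ i : Fin N, ∃ j, i ∈ G j)
    (P : Matrix (Fin N) (Fin Nc) ℝ)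
    (hP : ∀ i j, P i j = if i ∈ G j then 1 else 0)
    (Ac : Matrix (Fin Nc) (Fin Nc) ℝ)
    (hAc : Ac = Pᵀ * A * P) :
    (∀ i, 0 < Ac i i) ∧ (∀ i j, i ≠ j → Ac i j ≤ 0) ∧
    (∀ i, ∑ j ∈ Finset.univ.erase i, |Ac i j| < |Ac i i|) :=
  coarse_grid_matrix_sdd_general A hdiag hoff hsdd G hG_nonempty hG_disjoint hG_cover P hP Ac hAc
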